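/- arXiv:2201.00474 — 2 statements merged into one kernel-verified Lean document; each statement's English description precedes it below -/
import Mathlib

section
/- Let A ⊂ ℝ^d be compact, s > d, c₀ > 0, and let ω_N ⊂ A be configurations with Δ(ω_N) ≥ c₀ N^{−1/d}. Let w : A × A → [0,∞) be bounded. Then limsup_{N→∞} N^{−1−s/d} ∑_{x∈ω_N} ∑_{y∉N_k(x;ω_N), y≠x} w(x,y) ‖x−y‖^{−s} ≤ c(k,s,d), where c(k,s,d) → 0 as k → ∞; in fact c(k,s,d) can be taken as (sup w) · c₂(d)(2/c₀)^s ∑_{m ≥ M(k)} m^{d−1−s} with M(k) → ∞ as k → ∞. -/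
open Filter Metric

lemma coord_dist_le (d : ℕ) (y x : EuclideanSpace ℝ (Fin d)) (i : Fin d) :
    dist (y i) (x i) ≤ dist y x := by
  rw [EuclideanSpace.dist_eq]
  have h1 : dist (y i) (x i) ^ 2 ≤ ∑ j, dist (y j) (x j) ^ 2 :=
    Finset.single_le_sum (f := fun j => dist (y j) (x j) ^ 2)
      (fun j _ => sq_nonneg _) (Finset.mem_univ i)
  calc dist (y i) (x i) = Real.sqrt (dist (y i) (x i) ^ 2) := by
        rw [Real.sqrt_sq dist_nonneg]
    _ ≤ _ := Real.sqrt_le_sqrt h1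

lemma ball_count (d : ℕ) (hd : 0 < d) (P : Finset (EuclideanSpace ℝ (Fin d)))
    (δ : ℝ) (hδ : 0 < δ)
    (hsep : ∀ y ∈ P, ∀ z ∈ P, y ≠ z → δ ≤ dist y z)
    (x : EuclideanSpace ℝ (Fin d)) (R : ℝ) (hR : 0 ≤ R)
    [DecidablePred (fun y => dist x y ≤ R)] :
    ((P.filter (fun y => dist x y ≤ R)).card : ℝ) ≤ (4 * Real.sqrt d * R / δ + 2) ^ d := by
  have hsd : (1:ℝ) ≤ Real.sqrt d := by
    rw [show (1:ℝ) = Real.sqrt 1 by simp]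
    exact Real.sqrt_le_sqrt (by exact_mod_cast hd)
  have hsd0 : (0:ℝ) < Real.sqrt d := lt_of_lt_of_le one_pos hsd
  set t : ℝ := δ / (2 * Real.sqrt d) with ht
  have htpos : 0 < t := div_pos hδ (by positivity)
  set F : EuclideanSpace ℝ (Fin d) → (Fin d → ℤ) := fun y i => ⌊y i / t⌋ with hF
  set tgt : Finset (Fin d → ℤ) :=
    Fintype.piFinset (fun i => Finset.Icc ⌊(x i - R)/t⌋ ⌊(x i + R)/t⌋) with htgt
  have hmaps : ∀ y ∈ P.filter (fun y => dist x y ≤ R), F y ∈ tgt := by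
    intro y hy
    rw [Finset.mem_filter] at hy
    rw [htgt, Fintype.mem_piFinset]
    intro i
    rw [Finset.mem_Icc]
    have h1 : dist (y i) (x i) ≤ R := le_trans (coord_dist_le d y x i) (by rw [dist_comm]; exact hy.2)
    rw [Real.dist_eq, abs_le] at h1
    constructor
    · exact Int.floor_le_floor (by gcongr ?_ / t; linarith)
    · exact Int.floor_le_floor (by gcongr ?_ / t; linarith)
  have hinj : Set.InjOn F (P.filter (fun y => dist x y ≤ R)) := by
    intro y hy z hz hyz
    simp only [Finset.coe_filter, Set.mem_setOf_eq] at hy hz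
    by_contra hne
    have hlt : dist y z < δ := by
      rw [EuclideanSpace.dist_eq]
      have hterm : ∀ j : Fin d, dist (y j) (z j) ^ 2 < t ^ 2 := by
        intro j
        have h2 : |y j / t - z j / t| < 1 := Int.abs_sub_lt_one_of_floor_eq_floor (congrFun hyz j)
        rw [div_sub_div_same, abs_div, abs_of_pos htpos, div_lt_one htpos] at h2
        have hd2 : dist (y j) (z j) < t := by rw [Real.dist_eq]; exact h2
        exact pow_lt_pow_left₀ hd2 dist_nonneg (by norm_num)
      have hsum : ∑ j, dist (y j) (z j) ^ 2 < ∑ _j : Fin d, t ^ 2 := by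
        apply Finset.sum_lt_sum_of_nonempty
        · exact Finset.univ_nonempty_iff.mpr ⟨⟨0, hd⟩⟩
        · intro j _; exact hterm j
      have h3 : Real.sqrt (∑ j, dist (y j) (z j) ^ 2) < Real.sqrt (d * t ^ 2) := by
        apply Real.sqrt_lt_sqrt (Finset.sum_nonneg fun j _ => sq_nonneg _)
        simpa [Finset.card_univ] using hsum
      calc Real.sqrt (∑ j, dist (y j) (z j) ^ 2) < Real.sqrt (d * t ^ 2) := h3
        _ = Real.sqrt d * t := by
            rw [Real.sqrt_mul (by positivity), Real.sqrt_sq htpos.le]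
        _ = δ / 2 := by rw [ht]; field_simp
        _ < δ := by linarith
    exact absurd (hsep y hy.1 z hz.1 hne) (not_le.mpr hlt)
  have hcard : (P.filter (fun y => dist x y ≤ R)).card ≤ tgt.card :=
    Finset.card_le_card_of_injOn F hmaps hinj
  have htoNat : ∀ c : ℤ, ((c.toNat : ℝ)) ≤ max (c:ℝ) 0 := by
    intro c
    rcases le_or_gt c 0 with h|h
    · simp [Int.toNat_of_nonpos h]
    · exact le_max_of_le_left (by exact_mod_cast (Int.toNat_of_nonneg h.le).le)
  have htgtcard : (tgt.card : ℝ) ≤ (4 * Real.sqrt d * R / δ + 2) ^ d := by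
    rw [htgt, Fintype.card_piFinset]
    push_cast
    calc (∏ i, ((Finset.Icc ⌊(x i - R)/t⌋ ⌊(x i + R)/t⌋).card : ℝ))
        ≤ ∏ _i : Fin d, (4 * Real.sqrt d * R / δ + 2) := by
          apply Finset.prod_le_prod (fun i _ => by positivity)
          intro i _
          rw [Int.card_Icc]
          have hB : (0:ℝ) ≤ 4 * Real.sqrt d * R / δ + 2 := by positivity
          refine le_trans (htoNat _) (max_le ?_ hB)
          have hfl1 : ((⌊(x i + R)/t⌋ : ℝ)) ≤ (x i + R)/t := Int.floor_le _
          have hfl2 : (x i - R)/t - 1 < (⌊(x i - R)/t⌋ : ℝ) := Int.sub_one_lt_floor _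
          have hkey : (x i + R)/t - (x i - R)/t = 4 * Real.sqrt d * R / δ := by
            rw [ht]; field_simp; ring
          push_cast
          linarith
      _ = (4 * Real.sqrt d * R / δ + 2) ^ d := by
          rw [Finset.prod_const, Finset.card_univ, Fintype.card_fin]
  calc ((P.filter (fun y => dist x y ≤ R)).card : ℝ) ≤ (tgt.card : ℝ) := by exact_mod_cast hcard
    _ ≤ _ := htgtcard

set_option maxHeartbeats 2000000 in
open scoped Classical in
lemma inner_bound (d : ℕ) (hd : 0 < d) (s : ℝ) (hds : (d:ℝ) < s)
    (δ : ℝ) (hδ : 0 < δ) (P : Finset (EuclideanSpace ℝ (Fin d)))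
    (hsep : ∀ y ∈ P, ∀ z ∈ P, y ≠ z → δ ≤ dist y z)
    (x : EuclideanSpace ℝ (Fin d)) (hx : x ∈ P)
    (k : ℕ) (nb : Finset (EuclideanSpace ℝ (Fin d)))
    (hnb : nb ⊆ P.erase x) (hcard : nb.card = k)
    (hclose : ∀ y ∈ nb, ∀ z ∈ P.erase x, z ∉ nb → dist x y ≤ dist x z)
    (g : EuclideanSpace ℝ (Fin d) → ℝ) (M : ℝ) (hg : ∀ y, 0 ≤ g y ∧ g y ≤ M) :
    ∑ y ∈ P.erase x \ nb, g y * dist x y ^ (-s)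
      ≤ M * ((12 * Real.sqrt d)^d * δ^(-s) *
          (((((k:ℝ)+2)^((1:ℝ)/(d:ℝ))) / (8 * Real.sqrt d)) ^ ((d:ℝ)-s)) *
          (1 - (2:ℝ)^((d:ℝ)-s))⁻¹) := by
  have hsd : (1:ℝ) ≤ Real.sqrt d := by
    rw [show (1:ℝ) = Real.sqrt 1 by simp]
    exact Real.sqrt_le_sqrt (by exact_mod_cast hd)
  have hsd0 : (0:ℝ) < Real.sqrt d := lt_of_lt_of_le one_pos hsd
  have hM : 0 ≤ M := le_trans (hg x).1 (hg x).2
  set tk : ℝ := ((k:ℝ)+2)^((1:ℝ)/(d:ℝ)) with htk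
  have htk0 : 0 < tk := Real.rpow_pos_of_pos (by positivity) _
  set a : ℝ := tk / (8 * Real.sqrt d) with ha
  have ha0 : 0 < a := div_pos htk0 (by positivity)
  set q : ℝ := (2:ℝ)^((d:ℝ)-s) with hq
  have hq0 : 0 < q := Real.rpow_pos_of_pos (by norm_num) _
  have hq1 : q < 1 := Real.rpow_lt_one_of_one_lt_of_neg (by norm_num) (by linarith)
  set T := P.erase x \ nb with hT
  -- Step A : distances in T are at least δ * a
  have stepA : ∀ z ∈ T, δ * a ≤ dist x z := by
    intro z hz
    rw [hT, Finset.mem_sdiff] at hz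
    obtain ⟨hz1, hz2⟩ := hz
    have hzP : z ∈ P := Finset.mem_of_mem_erase hz1
    have hzx : z ≠ x := Finset.ne_of_mem_erase hz1
    have hδr : δ ≤ dist x z := by
      rw [dist_comm]; exact hsep z hzP x hx hzx
    have hr0 : 0 ≤ dist x z := dist_nonneg
    -- counting
    have hsub : insert x (insert z nb) ⊆ P.filter (fun y => dist x y ≤ dist x z) := by
      intro y hy
      rw [Finset.mem_insert, Finset.mem_insert] at hy
      rw [Finset.mem_filter]
      rcases hy with rfl | rfl | hy
      · exact ⟨hx, by simpa using dist_nonneg⟩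
      · exact ⟨hzP, le_refl _⟩
      · exact ⟨Finset.mem_of_mem_erase (hnb hy), hclose y hy z hz1 hz2⟩
    have hxnb : x ∉ insert z nb := by
      rw [Finset.mem_insert]
      push_neg
      exact ⟨fun h => hzx h.symm, fun h => (Finset.notMem_erase x P) (hnb h)⟩
    have hznb : z ∉ nb := hz2
    have hcard2 : (insert x (insert z nb)).card = k + 2 := by
      rw [Finset.card_insert_of_notMem hxnb, Finset.card_insert_of_notMem hznb, hcard]
    have hcount : ((k:ℝ) + 2) ≤ (4 * Real.sqrt d * dist x z / δ + 2) ^ d := by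
      calc ((k:ℝ)+2) = ((k+2 : ℕ) : ℝ) := by push_cast; ring
        _ ≤ ((P.filter (fun y => dist x y ≤ dist x z)).card : ℝ) := by
            exact_mod_cast hcard2 ▸ Finset.card_le_card hsub
        _ ≤ _ := ball_count d hd P δ hδ hsep x (dist x z) hr0
    have hB0 : (0:ℝ) ≤ 4 * Real.sqrt d * dist x z / δ + 2 := by positivity
    have htk_le : tk ≤ 4 * Real.sqrt d * dist x z / δ + 2 := by
      have h1 : tk ≤ ((4 * Real.sqrt d * dist x z / δ + 2) ^ d) ^ ((1:ℝ)/(d:ℝ)) := by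
        rw [htk]
        exact Real.rpow_le_rpow (by positivity) hcount (by positivity)
      have h2 : ((4 * Real.sqrt d * dist x z / δ + 2) ^ d) ^ ((1:ℝ)/(d:ℝ))
          = 4 * Real.sqrt d * dist x z / δ + 2 := by
        rw [← Real.rpow_natCast (4 * Real.sqrt d * dist x z / δ + 2) d,
          ← Real.rpow_mul hB0]
        rw [mul_one_div, div_self (by exact_mod_cast hd.ne' : (d:ℝ) ≠ 0), Real.rpow_one]
      rw [h2] at h1; exact h1
    rcases le_or_gt tk 4 with hc | hc
    · -- a ≤ 1 so δ * a ≤ δ ≤ r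
      have ha1 : a ≤ 1 := by
        rw [ha, div_le_one (by positivity)]
        nlinarith
      nlinarith
    · -- tk ≥ 4 : tk/2 ≤ tk - 2 ≤ 4√d r/δ
      have h3 : δ * tk ≤ 8 * Real.sqrt d * dist x z := by
        have h4 : (tk - 2) * δ ≤ 4 * Real.sqrt d * dist x z := by
          have := sub_le_sub_right htk_le 2
          rw [add_sub_cancel_right] at this
          calc (tk - 2) * δ ≤ (4 * Real.sqrt d * dist x z / δ) * δ := by
                apply mul_le_mul_of_nonneg_right this hδ.le
            _ = 4 * Real.sqrt d * dist x z := by field_simp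
        nlinarith
      have heq : δ * a = (δ * tk)/(8 * Real.sqrt d) := by rw [ha]; ring
      rw [heq, div_le_iff₀ (by positivity)]
      nlinarith
  -- Step B : dyadic shells
  have hδa : 0 < δ * a := by positivity
  set jf : EuclideanSpace ℝ (Fin d) → ℕ := fun z => Nat.log 2 ⌊dist x z / (δ * a)⌋₊ with hjf
  have hshell : ∀ z ∈ T, δ * a * 2 ^ (jf z) ≤ dist x z ∧ dist x z < δ * a * 2 ^ (jf z + 1) := by
    intro z hz
    have hza := stepA z hz
    have hu1 : (1:ℝ) ≤ dist x z / (δ * a) := (one_le_div hδa).mpr hza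
    set u : ℝ := dist x z / (δ * a) with hu
    have hu0 : 0 ≤ u := by linarith
    have hm1 : 1 ≤ ⌊u⌋₊ := Nat.le_floor (by exact_mod_cast hu1)
    have hm0 : ⌊u⌋₊ ≠ 0 := by omega
    have hdu : dist x z = δ * a * u := by rw [hu]; field_simp
    have hlow : (2:ℝ) ^ (jf z) ≤ u := by
      have h1 : (2:ℕ) ^ (Nat.log 2 ⌊u⌋₊) ≤ ⌊u⌋₊ := Nat.pow_log_le_self 2 hm0
      have h2 : ((⌊u⌋₊ : ℕ) : ℝ) ≤ u := Nat.floor_le hu0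
      have : ((2:ℝ)) ^ (Nat.log 2 ⌊u⌋₊) ≤ ((⌊u⌋₊ : ℕ) : ℝ) := by exact_mod_cast h1
      exact le_trans this h2
    have hhigh : u < (2:ℝ) ^ (jf z + 1) := by
      have h1 : ⌊u⌋₊ < 2 ^ (Nat.log 2 ⌊u⌋₊ + 1) := Nat.lt_pow_succ_log_self (by norm_num) _
      have h2 : u < (⌊u⌋₊ : ℝ) + 1 := Nat.lt_floor_add_one u
      have h3 : ((⌊u⌋₊ : ℝ) + 1) ≤ ((2:ℝ)) ^ (Nat.log 2 ⌊u⌋₊ + 1) := by exact_mod_cast h1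
      exact lt_of_lt_of_le h2 h3
    constructor
    · rw [hdu]
      have := mul_le_mul_of_nonneg_left hlow hδa.le
      calc δ * a * 2 ^ (jf z) ≤ δ * a * u := by exact this
        _ = δ * a * u := rfl
    · rw [hdu]
      exact mul_lt_mul_of_pos_left hhigh hδa
  set C1 : ℝ := (12 * Real.sqrt d)^d * δ^(-s) * a ^ ((d:ℝ)-s) with hC1
  have hC1_0 : 0 ≤ C1 := by
    rw [hC1]
    have := Real.rpow_nonneg hδ.le (-s)
    have := Real.rpow_nonneg ha0.le ((d:ℝ)-s)
    positivity
  have fiber_bound : ∀ j ∈ T.image jf,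
      ∑ z ∈ T.filter (fun z => jf z = j), g z * dist x z ^ (-s) ≤ M * C1 * q ^ j := by
    intro j hj
    obtain ⟨z₀, hz₀T, hz₀j⟩ := Finset.mem_image.mp hj
    have hz₀e : z₀ ∈ P.erase x := (Finset.mem_sdiff.mp (hT ▸ hz₀T)).1
    have hz₀δ : δ ≤ dist x z₀ := by
      rw [dist_comm]
      exact hsep z₀ (Finset.mem_of_mem_erase hz₀e) x hx (Finset.ne_of_mem_erase hz₀e)
    have hz₀s := (hshell z₀ hz₀T).2
    rw [hz₀j] at hz₀s
    have h2j : 1 < a * 2 ^ (j+1) := by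
      have : δ * 1 < δ * (a * 2 ^ (j+1)) := by
        rw [mul_one]
        calc δ ≤ dist x z₀ := hz₀δ
          _ < δ * a * 2 ^ (j+1) := hz₀s
          _ = δ * (a * 2 ^ (j+1)) := by ring
      exact lt_of_mul_lt_mul_left this hδ.le
    have hterm : ∀ z ∈ T.filter (fun z => jf z = j),
        g z * dist x z ^ (-s) ≤ M * (δ * a * 2^j)^(-s) := by
      intro z hz
      rw [Finset.mem_filter] at hz
      have hs1 := (hshell z hz.1).1
      rw [hz.2] at hs1
      have hpos : 0 < δ * a * 2^j := by positivity
      have hle : dist x z ^ (-s) ≤ (δ * a * 2^j)^(-s) :=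
        Real.rpow_le_rpow_of_nonpos hpos hs1 (by linarith [hd.le, hds] : -s ≤ 0)
      exact mul_le_mul (hg z).2 hle (Real.rpow_nonneg dist_nonneg _) hM
    have hcardf : ((T.filter (fun z => jf z = j)).card : ℝ) ≤ (12 * Real.sqrt d * a * 2^j)^d := by
      have hsubf : T.filter (fun z => jf z = j)
          ⊆ P.filter (fun y => dist x y ≤ δ * a * 2^(j+1)) := by
        intro z hz
        rw [Finset.mem_filter] at hz
        have hs2 := (hshell z hz.1).2
        rw [hz.2] at hs2
        rw [Finset.mem_filter]
        have hze : z ∈ P.erase x := (Finset.mem_sdiff.mp (hT ▸ hz.1)).1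
        exact ⟨Finset.mem_of_mem_erase hze, hs2.le⟩
      have hR0 : (0:ℝ) ≤ δ * a * 2^(j+1) := by positivity
      calc ((T.filter (fun z => jf z = j)).card : ℝ)
          ≤ ((P.filter (fun y => dist x y ≤ δ * a * 2^(j+1))).card : ℝ) := by
            exact_mod_cast Finset.card_le_card hsubf
        _ ≤ (4 * Real.sqrt d * (δ * a * 2^(j+1)) / δ + 2)^d :=
            ball_count d hd P δ hδ hsep x _ hR0
        _ ≤ (12 * Real.sqrt d * a * 2^j)^d := by
            apply pow_le_pow_left₀ (by positivity)
            have he : 4 * Real.sqrt d * (δ * a * 2^(j+1)) / δ = 8 * Real.sqrt d * (a * 2^j) := by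
              field_simp
              ring
            rw [he]
            have h2 : (2:ℝ) ≤ 4 * Real.sqrt d * (a * 2^j) := by
              have hh : (1:ℝ)/2 < a * 2^j := by
                have : a * 2^(j+1) = 2 * (a * 2^j) := by ring
                rw [this] at h2j
                linarith
              nlinarith
            nlinarith
    have e2 : (δ * a * 2^j : ℝ)^(-s) = δ^(-s) * a^(-s) * ((2:ℝ)^j)^(-s) := by
      rw [Real.mul_rpow (by positivity) (by positivity),
        Real.mul_rpow (by positivity) (by positivity)]
    have e3 : a^d * a^(-s) = a ^ ((d:ℝ)-s) := by
      rw [← Real.rpow_natCast a d, ← Real.rpow_add ha0, sub_eq_add_neg]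
    have e4 : ((2:ℝ)^j)^d * ((2:ℝ)^j)^(-s) = q ^ j := by
      rw [hq, ← Real.rpow_natCast ((2:ℝ) ^ ((d:ℝ) - s)) j,
        ← Real.rpow_mul (by norm_num : (0:ℝ) ≤ 2),
        ← Real.rpow_natCast ((2:ℝ)^j) d, ← Real.rpow_add (by positivity : (0:ℝ) < (2:ℝ)^j),
        ← Real.rpow_natCast (2:ℝ) j, ← Real.rpow_mul (by norm_num : (0:ℝ) ≤ 2)]
      congr 1
      ring
    calc ∑ z ∈ T.filter (fun z => jf z = j), g z * dist x z ^ (-s)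
        ≤ (T.filter (fun z => jf z = j)).card • (M * (δ * a * 2^j)^(-s)) :=
          Finset.sum_le_card_nsmul _ _ _ hterm
      _ = ((T.filter (fun z => jf z = j)).card : ℝ) * (M * (δ * a * 2^j)^(-s)) := by
          rw [nsmul_eq_mul]
      _ ≤ (12 * Real.sqrt d * a * 2^j)^d * (M * (δ * a * 2^j)^(-s)) := by
          apply mul_le_mul_of_nonneg_right hcardf
          exact mul_nonneg hM (Real.rpow_nonneg (by positivity) _)
      _ = M * C1 * q ^ j := by
          rw [e2,
            show (12 * Real.sqrt d * a * 2^j : ℝ)^d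
              = (12 * Real.sqrt d)^d * a^d * ((2:ℝ)^j)^d from by rw [mul_pow, mul_pow],
            hC1, ← e3, ← e4]
          ring
  have hsplit : ∑ z ∈ T, g z * dist x z ^ (-s)
      = ∑ j ∈ T.image jf, ∑ z ∈ T.filter (fun z => jf z = j), g z * dist x z ^ (-s) :=
    (Finset.sum_fiberwise_of_maps_to (fun z hz => Finset.mem_image_of_mem jf hz) _).symm
  have hgeo : ∑ j ∈ T.image jf, q ^ j ≤ (1 - q)⁻¹ := by
    calc ∑ j ∈ T.image jf, q ^ j ≤ ∑' j : ℕ, q ^ j :=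
        Summable.sum_le_tsum _ (fun i _ => (pow_pos hq0 i).le) (summable_geometric_of_lt_one hq0.le hq1)
      _ = (1 - q)⁻¹ := tsum_geometric_of_lt_one hq0.le hq1
  calc ∑ y ∈ T, g y * dist x y ^ (-s)
      = ∑ j ∈ T.image jf, ∑ z ∈ T.filter (fun z => jf z = j), g z * dist x z ^ (-s) := hsplit
    _ ≤ ∑ j ∈ T.image jf, M * C1 * q ^ j := Finset.sum_le_sum fiber_bound
    _ = M * C1 * ∑ j ∈ T.image jf, q ^ j := by rw [Finset.mul_sum]
    _ ≤ M * C1 * (1 - q)⁻¹ := by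
        apply mul_le_mul_of_nonneg_left hgeo (mul_nonneg hM hC1_0)
    _ = M * ((12 * Real.sqrt d)^d * δ^(-s) * (a ^ ((d:ℝ)-s)) * (1 - q)⁻¹) := by
        rw [hC1]; ring


open scoped Classical in
/-- Truncation-error bound: for uniformly separated configurations `ω_N ⊆ A` with bounded
weight `w ≤ M`, the limsup of the normalized weighted Riesz sum over pairs `(x,y)` with
`y` outside any valid set of `k` nearest neighbors of `x` is at most `M c(k)`, where
`c(k) → 0` as `k → ∞`. -/
theorem truncation_tail_vanishes (d : ℕ) (hd : 0 < d) (s : ℝ) (hds : (d : ℝ) < s)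
    (c₀ : ℝ) (hc₀ : 0 < c₀) :
    ∃ c : ℕ → ℝ, Tendsto c atTop (nhds 0) ∧
      ∀ (A : Set (EuclideanSpace ℝ (Fin d))), IsCompact A →
      ∀ (w : EuclideanSpace ℝ (Fin d) → EuclideanSpace ℝ (Fin d) → ℝ) (M : ℝ),
        (∀ x y, 0 ≤ w x y ∧ w x y ≤ M) →
      ∀ (ω : ℕ → Finset (EuclideanSpace ℝ (Fin d))),
        (∀ N, ↑(ω N) ⊆ A ∧ (ω N).card = N ∧
          ∀ x ∈ ω N, ∀ y ∈ ω N, x ≠ y → c₀ * (N : ℝ) ^ (-(1 : ℝ) / d) ≤ dist x y) →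
      ∀ (k : ℕ) (nbr : ℕ → EuclideanSpace ℝ (Fin d) → Finset (EuclideanSpace ℝ (Fin d))),
        (∀ N, ∀ x ∈ ω N, nbr N x ⊆ (ω N).erase x ∧
          (nbr N x).card = min k ((ω N).card - 1) ∧
          ∀ y ∈ nbr N x, ∀ z ∈ (ω N).erase x, z ∉ nbr N x → dist x y ≤ dist x z) →
      Filter.limsup (fun N : ℕ =>
          (N : ℝ) ^ (-(1 + s / (d : ℝ))) *
            ∑ x ∈ ω N, ∑ y ∈ (ω N).erase x \ nbr N x, w x y * (dist x y) ^ (-s))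
        Filter.atTop ≤ M * c k := by
  have hsd : (1:ℝ) ≤ Real.sqrt d := by
    rw [show (1:ℝ) = Real.sqrt 1 by simp]
    exact Real.sqrt_le_sqrt (by exact_mod_cast hd)
  have hsd0 : (0:ℝ) < Real.sqrt d := lt_of_lt_of_le one_pos hsd
  have hq0 : (0:ℝ) < (2:ℝ)^((d:ℝ)-s) := Real.rpow_pos_of_pos (by norm_num) _
  have hq1 : (2:ℝ)^((d:ℝ)-s) < 1 := Real.rpow_lt_one_of_one_lt_of_neg (by norm_num) (by linarith)
  refine ⟨fun k => ((12 * Real.sqrt d)^d * c₀^(-s) * (1 - (2:ℝ)^((d:ℝ)-s))⁻¹) *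
      ((((k:ℝ)+2)^((1:ℝ)/(d:ℝ)) / (8 * Real.sqrt d)) ^ ((d:ℝ)-s)), ?_, ?_⟩
  · have h1 : Tendsto (fun k : ℕ => (((k:ℝ)+2)^((1:ℝ)/(d:ℝ)) / (8 * Real.sqrt d))) atTop atTop := by
      apply Tendsto.atTop_div_const (by positivity)
      have h0 : Tendsto (fun k : ℕ => ((k:ℝ)+2)) atTop atTop :=
        tendsto_atTop_add_const_right atTop 2 tendsto_natCast_atTop_atTop
      exact (tendsto_rpow_atTop (by positivity : (0:ℝ) < 1/(d:ℝ))).comp h0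
    have h2 : Tendsto (fun x : ℝ => x ^ ((d:ℝ)-s)) atTop (nhds 0) := by
      have h := tendsto_rpow_neg_atTop (by linarith : (0:ℝ) < s - (d:ℝ))
      simpa [neg_sub] using h
    have h3 := (h2.comp h1).const_mul ((12 * Real.sqrt d)^d * c₀^(-s) * (1 - (2:ℝ)^((d:ℝ)-s))⁻¹)
    simpa using h3
  · intro A hA w M hw ω hω k nbr hnbr
    have hM : 0 ≤ M := le_trans (hw 0 0).1 (hw 0 0).2
    have hak0 : (0:ℝ) < ((k:ℝ)+2)^((1:ℝ)/(d:ℝ)) / (8 * Real.sqrt d) :=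
      div_pos (Real.rpow_pos_of_pos (by positivity) _) (by positivity)
    have hK0 : (0:ℝ) ≤ (12 * Real.sqrt d)^d * c₀^(-s) * (1 - (2:ℝ)^((d:ℝ)-s))⁻¹ :=
      mul_nonneg (mul_nonneg (by positivity) (Real.rpow_nonneg hc₀.le _))
        (inv_nonneg.mpr (by linarith))
    have hRHS0 : (0:ℝ) ≤ M * (((12 * Real.sqrt d)^d * c₀^(-s) * (1 - (2:ℝ)^((d:ℝ)-s))⁻¹) *
        ((((k:ℝ)+2)^((1:ℝ)/(d:ℝ)) / (8 * Real.sqrt d)) ^ ((d:ℝ)-s))) :=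
      mul_nonneg hM (mul_nonneg hK0 (Real.rpow_nonneg hak0.le _))
    have key : ∀ N : ℕ, (N : ℝ) ^ (-(1 + s / (d : ℝ))) *
        ∑ x ∈ ω N, ∑ y ∈ (ω N).erase x \ nbr N x, w x y * (dist x y) ^ (-s)
        ≤ M * (((12 * Real.sqrt d)^d * c₀^(-s) * (1 - (2:ℝ)^((d:ℝ)-s))⁻¹) *
          ((((k:ℝ)+2)^((1:ℝ)/(d:ℝ)) / (8 * Real.sqrt d)) ^ ((d:ℝ)-s))) := by
      intro N
      rcases Nat.eq_zero_or_pos N with rfl | hN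
      · have hω0 : ω 0 = ∅ := Finset.card_eq_zero.mp (hω 0).2.1
        rw [hω0]
        simpa using hRHS0
      · have hNpos : (0:ℝ) < (N:ℝ) := by exact_mod_cast hN
        have hδ : (0:ℝ) < c₀ * (N:ℝ)^(-(1:ℝ)/(d:ℝ)) :=
          mul_pos hc₀ (Real.rpow_pos_of_pos hNpos _)
        have hsep := (hω N).2.2
        have hcardN := (hω N).2.1
        -- inner bound
        have hC2 : (0:ℝ) ≤ (12 * Real.sqrt d)^d * (c₀ * (N:ℝ)^(-(1:ℝ)/(d:ℝ)))^(-s) *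
            ((((k:ℝ)+2)^((1:ℝ)/(d:ℝ)) / (8 * Real.sqrt d)) ^ ((d:ℝ)-s)) *
            (1 - (2:ℝ)^((d:ℝ)-s))⁻¹ :=
          mul_nonneg (mul_nonneg (mul_nonneg (by positivity) (Real.rpow_nonneg hδ.le _))
            (Real.rpow_nonneg hak0.le _)) (inv_nonneg.mpr (by linarith))
        have hinner : ∀ x ∈ ω N, ∑ y ∈ (ω N).erase x \ nbr N x, w x y * (dist x y) ^ (-s)
            ≤ M * ((12 * Real.sqrt d)^d * (c₀ * (N:ℝ)^(-(1:ℝ)/(d:ℝ)))^(-s) *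
              ((((k:ℝ)+2)^((1:ℝ)/(d:ℝ)) / (8 * Real.sqrt d)) ^ ((d:ℝ)-s)) *
              (1 - (2:ℝ)^((d:ℝ)-s))⁻¹) := by
          intro x hx
          obtain ⟨h1, h2, h3⟩ := hnbr N x hx
          rcases le_or_gt k ((ω N).card - 1) with hk | hk
          · have hcard : (nbr N x).card = k := by rw [h2]; exact min_eq_left hk
            exact inner_bound d hd s hds _ hδ (ω N) hsep x hx k (nbr N x) h1 hcard h3
              (w x) M (fun y => hw x y)
          · have heq : nbr N x = (ω N).erase x := by
              apply Finset.eq_of_subset_of_card_le h1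
              rw [h2, Finset.card_erase_of_mem hx, min_eq_right hk.le]
            rw [heq, Finset.sdiff_self]
            simpa using mul_nonneg hM hC2
        calc (N : ℝ) ^ (-(1 + s / (d : ℝ))) *
            ∑ x ∈ ω N, ∑ y ∈ (ω N).erase x \ nbr N x, w x y * (dist x y) ^ (-s)
            ≤ (N : ℝ) ^ (-(1 + s / (d : ℝ))) * ((N:ℝ) *
              (M * ((12 * Real.sqrt d)^d * (c₀ * (N:ℝ)^(-(1:ℝ)/(d:ℝ)))^(-s) *
                ((((k:ℝ)+2)^((1:ℝ)/(d:ℝ)) / (8 * Real.sqrt d)) ^ ((d:ℝ)-s)) *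
                (1 - (2:ℝ)^((d:ℝ)-s))⁻¹))) := by
              apply mul_le_mul_of_nonneg_left _ (Real.rpow_nonneg hNpos.le _)
              calc ∑ x ∈ ω N, ∑ y ∈ (ω N).erase x \ nbr N x, w x y * (dist x y) ^ (-s)
                  ≤ (ω N).card • (M * ((12 * Real.sqrt d)^d * (c₀ * (N:ℝ)^(-(1:ℝ)/(d:ℝ)))^(-s) *
                    ((((k:ℝ)+2)^((1:ℝ)/(d:ℝ)) / (8 * Real.sqrt d)) ^ ((d:ℝ)-s)) *
                    (1 - (2:ℝ)^((d:ℝ)-s))⁻¹)) := Finset.sum_le_card_nsmul _ _ _ hinner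
                _ = (N:ℝ) * (M * ((12 * Real.sqrt d)^d * (c₀ * (N:ℝ)^(-(1:ℝ)/(d:ℝ)))^(-s) *
                    ((((k:ℝ)+2)^((1:ℝ)/(d:ℝ)) / (8 * Real.sqrt d)) ^ ((d:ℝ)-s)) *
                    (1 - (2:ℝ)^((d:ℝ)-s))⁻¹)) := by
                  rw [nsmul_eq_mul, hcardN]
          _ = M * (((12 * Real.sqrt d)^d * c₀^(-s) * (1 - (2:ℝ)^((d:ℝ)-s))⁻¹) *
              ((((k:ℝ)+2)^((1:ℝ)/(d:ℝ)) / (8 * Real.sqrt d)) ^ ((d:ℝ)-s))) := by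
              have e1 : (c₀ * (N:ℝ)^(-(1:ℝ)/(d:ℝ)))^(-s) = c₀^(-s) * (N:ℝ)^(s/(d:ℝ)) := by
                rw [Real.mul_rpow hc₀.le (Real.rpow_nonneg hNpos.le _),
                  ← Real.rpow_mul hNpos.le,
                  show (-(1:ℝ)/(d:ℝ)) * (-s) = s/(d:ℝ) from by ring]
              have e2 : ((N:ℝ))^(-(1+s/(d:ℝ))) * (N:ℝ) * (N:ℝ)^(s/(d:ℝ)) = 1 := by
                rw [← Real.rpow_add_one hNpos.ne' (-(1+s/(d:ℝ))), ← Real.rpow_add hNpos,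
                  show (-(1+s/(d:ℝ)) + 1) + s/(d:ℝ) = 0 from by ring, Real.rpow_zero]
              rw [e1]
              calc (N : ℝ) ^ (-(1 + s / (d : ℝ))) * ((N:ℝ) *
                  (M * ((12 * Real.sqrt d)^d * (c₀^(-s) * (N:ℝ)^(s/(d:ℝ))) *
                    ((((k:ℝ)+2)^((1:ℝ)/(d:ℝ)) / (8 * Real.sqrt d)) ^ ((d:ℝ)-s)) *
                    (1 - (2:ℝ)^((d:ℝ)-s))⁻¹)))
                  = (((N:ℝ))^(-(1+s/(d:ℝ))) * (N:ℝ) * (N:ℝ)^(s/(d:ℝ))) *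
                    (M * ((12 * Real.sqrt d)^d * c₀^(-s) *
                      ((((k:ℝ)+2)^((1:ℝ)/(d:ℝ)) / (8 * Real.sqrt d)) ^ ((d:ℝ)-s)) *
                      (1 - (2:ℝ)^((d:ℝ)-s))⁻¹)) := by ring
                _ = M * (((12 * Real.sqrt d)^d * c₀^(-s) * (1 - (2:ℝ)^((d:ℝ)-s))⁻¹) *
                    ((((k:ℝ)+2)^((1:ℝ)/(d:ℝ)) / (8 * Real.sqrt d)) ^ ((d:ℝ)-s))) := by
                    rw [e2]; ring
    have hpos : ∀ N : ℕ, (0:ℝ) ≤ (N : ℝ) ^ (-(1 + s / (d : ℝ))) *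
        ∑ x ∈ ω N, ∑ y ∈ (ω N).erase x \ nbr N x, w x y * (dist x y) ^ (-s) := by
      intro N
      apply mul_nonneg (Real.rpow_nonneg (Nat.cast_nonneg N) _)
      apply Finset.sum_nonneg
      intro x _
      apply Finset.sum_nonneg
      intro y _
      exact mul_nonneg (hw x y).1 (Real.rpow_nonneg dist_nonneg _)
    exact Filter.limsup_le_of_le (isCoboundedUnder_le_of_le atTop hpos)
      (Filter.Eventually.of_forall key)
end

section
/- Let A ⊂ ℝ^p be compact with finite d-dimensional upper Minkowski content M_d(A) < ∞, s > 0, and suppose ω_N ⊂ A are N-point configurations such that at least (1 − δ)N of the points x ∈ ω_N have nearest-neighbor distance ‖x − nn(x)‖ ≥ γ N^{−1/d}, while all N pairwise distances are positive. If additionally M_d(A) = 0, then for γ and δ chosen with 1 − δ > 0, one obtains a contradiction for large N: specifically, (1 − δ) v_p 2^{−p} γ^d ≤ v_{p−d} · ε for every ε > 0, which is impossible when (1−δ)γ^d > 0. Hence if M_d(A) = 0 then liminf_{N→∞} E_s^{1,*}(A,N)/N^{1+s/d} = +∞. -/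
open Filter Metric MeasureTheory
open scoped ENNReal

/-- The nearest-neighbor Riesz `s`-energy of an `N`-tuple of points, with values in
`[0,∞]` (a repeated point contributes `+∞`). -/
noncomputable def tupleEnergy {E : Type*} [NormedAddCommGroup E] (s : ℝ) (k : ℕ) {N : ℕ}
    (x : Fin N → E) : ℝ≥0∞ :=
  ∑ i : Fin N,
    (((Multiset.sort
        ((Finset.univ.erase i).val.map (fun j => edist (x i) (x j))) (· ≤ ·)).take k).map
      (fun r => r ^ (-s))).sum

/-- Minimal `k`-nearest-neighbor Riesz `s`-energy over `N`-point configurations in `A`. -/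
noncomputable def minTupleEnergy {E : Type*} [NormedAddCommGroup E] (s : ℝ) (k : ℕ)
    (A : Set E) (N : ℕ) : ℝ≥0∞ :=
  ⨅ (x : Fin N → E) (_ : ∀ i, x i ∈ A), tupleEnergy s k x

private lemma head_pow_bound (s : ℝ) (hs : 0 ≤ s) (m : Multiset ℝ≥0∞) {e r : ℝ≥0∞}
    (he : e ∈ m) (her : e < r) :
    r ^ (-s) ≤ (((Multiset.sort m (· ≤ ·)).take 1).map (fun t => t ^ (-s))).sum := by
  have hsorted : List.Pairwise (· ≤ ·) (Multiset.sort m (· ≤ ·)) := Multiset.pairwise_sort _ _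
  have hmem : e ∈ Multiset.sort m (· ≤ ·) := (Multiset.mem_sort _).2 he
  cases h : Multiset.sort m (· ≤ ·) with
  | nil => rw [h] at hmem; simp at hmem
  | cons a l =>
    rw [h] at hmem hsorted
    have ha : a ≤ e := by
      rcases List.mem_cons.1 hmem with rfl | hm
      · exact le_refl _
      · exact List.rel_of_pairwise_cons hsorted hm
    have har : a < r := lt_of_le_of_lt ha her
    have hkey : r ^ (-s) ≤ a ^ (-s) := by
      rw [ENNReal.rpow_neg, ENNReal.rpow_neg]
      exact ENNReal.inv_le_inv.2 (ENNReal.rpow_le_rpow har.le hs)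
    simpa using hkey

private lemma energy_lower_bound {E : Type*} [NormedAddCommGroup E] (s : ℝ) (hs : 0 ≤ s)
    {N : ℕ} (x : Fin N → E) (r : ℝ≥0∞) (B : Finset (Fin N))
    (hB : ∀ i ∈ B, ∃ j, j ≠ i ∧ edist (x i) (x j) < r) :
    (B.card : ℝ≥0∞) * r ^ (-s) ≤ tupleEnergy s 1 x := by
  have h1 : ∀ i ∈ B, r ^ (-s) ≤
      (((Multiset.sort
        ((Finset.univ.erase i).val.map (fun j => edist (x i) (x j))) (· ≤ ·)).take 1).map
      (fun t => t ^ (-s))).sum := by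
    intro i hi
    obtain ⟨j, hj, hlt⟩ := hB i hi
    refine head_pow_bound s hs _ ?_ hlt
    exact Multiset.mem_map.2 ⟨j, (by simp [Finset.erase_val, Multiset.mem_erase_of_ne hj]), rfl⟩
  calc (B.card : ℝ≥0∞) * r ^ (-s) = ∑ _i ∈ B, r ^ (-s) := by simp [mul_comm]
    _ ≤ ∑ i ∈ B, (((Multiset.sort
          ((Finset.univ.erase i).val.map (fun j => edist (x i) (x j))) (· ≤ ·)).take 1).map
        (fun t => t ^ (-s))).sum := Finset.sum_le_sum h1
    _ ≤ tupleEnergy s 1 x := Finset.sum_le_sum_of_subset B.subset_univ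

private lemma volume_lower_bound (p : ℕ) (A : Set (EuclideanSpace ℝ (Fin p)))
    {N : ℕ} (x : Fin N → EuclideanSpace ℝ (Fin p)) (hx : ∀ i, x i ∈ A)
    (G : Finset (Fin N)) {ρ : ℝ}
    (hsep : ∀ i ∈ G, ∀ j ∈ G, i ≠ j → ρ + ρ ≤ dist (x i) (x j)) :
    (G.card : ℝ≥0∞) * volume (ball (0 : EuclideanSpace ℝ (Fin p)) ρ)
      ≤ volume (cthickening ρ A) := by
  have hdisj : (G : Set (Fin N)).PairwiseDisjoint (fun i => ball (x i) ρ) := by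
    intro i hi j hj hij
    exact Metric.ball_disjoint_ball (hsep i hi j hj hij)
  have hUnion : (⋃ i ∈ G, ball (x i) ρ) ⊆ cthickening ρ A := by
    intro y hy
    simp only [Set.mem_iUnion] at hy
    obtain ⟨i, _, hi⟩ := hy
    exact closedBall_subset_cthickening (hx i) ρ (ball_subset_closedBall hi)
  calc (G.card : ℝ≥0∞) * volume (ball (0 : EuclideanSpace ℝ (Fin p)) ρ)
      = ∑ i ∈ G, volume (ball (x i) ρ) := by
        simp [Measure.addHaar_ball_center, mul_comm]
    _ = volume (⋃ i ∈ G, ball (x i) ρ) :=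
        (measure_biUnion_finset hdisj (fun i _ => measurableSet_ball)).symm
    _ ≤ volume (cthickening ρ A) := measure_mono hUnion

/-- If the compact set `A ⊂ ℝ^p` has vanishing `d`-dimensional Minkowski content, then
the normalized minimal nearest-neighbor Riesz `s`-energy blows up:
`liminf_N E_s^{1,*}(A,N)/N^{1+s/d} = +∞`. -/
theorem liminf_energy_infinite_of_minkowski_content_zero (p d : ℕ) (hd : 0 < d)
    (hdp : d ≤ p) (s : ℝ) (hs : 0 < s) (A : Set (EuclideanSpace ℝ (Fin p)))
    (hA : IsCompact A)
    (hMink : Tendsto (fun r : ℝ =>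
        (volume (cthickening r A)).toReal / r ^ ((p : ℝ) - d))
      (nhdsWithin 0 (Set.Ioi 0)) (nhds 0)) :
    Filter.liminf (fun N : ℕ =>
        minTupleEnergy s 1 A N / ENNReal.ofReal ((N : ℝ) ^ (1 + s / (d : ℝ))))
      Filter.atTop = ⊤ := by
  rw [eq_top_iff]
  rw [le_liminf_iff]
  intro c hc
  -- constants
  set C : ℝ := c.toReal + 1 with hCdef
  have hC : 0 < C := by positivity
  set γ : ℝ := (2 * C) ^ (-(1 / s)) with hγdef
  have hγ : 0 < γ := Real.rpow_pos_of_pos (by positivity) _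
  have hγs : C * γ ^ s = 1 / 2 := by
    rw [hγdef, ← Real.rpow_mul (by positivity : (0:ℝ) ≤ 2 * C),
      show -(1 / s) * s = -1 by field_simp, Real.rpow_neg_one]
    field_simp
  -- volume of unit ball
  set B : ℝ≥0∞ := volume (ball (0 : EuclideanSpace ℝ (Fin p)) 1) with hBdef
  have hB0 : 0 < B := measure_ball_pos _ _ one_pos
  have hBtop : B ≠ ⊤ := measure_ball_lt_top.ne
  have hBt : 0 < B.toReal := ENNReal.toReal_pos hB0.ne' hBtop
  set ε : ℝ := 1 / 4 * ((γ / 2) ^ d * B.toReal) with hεdef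
  have hε : 0 < ε := by positivity
  -- from the Minkowski content hypothesis
  obtain ⟨ρ₀, hρ₀, hMk⟩ : ∃ ρ₀ > 0, ∀ ρ : ℝ, 0 < ρ → ρ < ρ₀ →
      (volume (cthickening ρ A)).toReal / ρ ^ ((p : ℝ) - d) < ε := by
    obtain ⟨ρ₀, hρ₀, h⟩ := (Metric.tendsto_nhdsWithin_nhds.1 hMink) ε hε
    refine ⟨ρ₀, hρ₀, fun ρ hρ1 hρ2 => ?_⟩
    have h2 := h (Set.mem_Ioi.2 hρ1) (by simpa [Real.dist_eq, abs_of_pos hρ1] using hρ2)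
    rw [Real.dist_eq, sub_zero] at h2
    exact lt_of_le_of_lt (le_abs_self _) h2
  -- eventually: N ≥ 1 and γ/2 * N^(-1/d) < ρ₀
  have htend : Tendsto (fun N : ℕ => γ / 2 * (N : ℝ) ^ (-(1 / (d : ℝ)))) atTop (nhds 0) := by
    have h1 : Tendsto (fun t : ℝ => t ^ (-(1 / (d : ℝ)))) atTop (nhds 0) :=
      tendsto_rpow_neg_atTop (by positivity)
    have := (h1.comp tendsto_natCast_atTop_atTop).const_mul (γ / 2)
    simpa using this
  have hev := (htend.eventually (gt_mem_nhds hρ₀)).and (eventually_ge_atTop 1)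
  filter_upwards [hev] with N ⟨hNρ, hN1⟩
  -- notation
  have hn0 : (0 : ℝ) < (N : ℝ) := by exact_mod_cast hN1
  set t : ℝ := (N : ℝ) ^ (-(1 / (d : ℝ))) with htdef
  have ht : 0 < t := Real.rpow_pos_of_pos hn0 _
  set r : ℝ := γ * t with hrdef
  have hr : 0 < r := by positivity
  set ρ : ℝ := γ / 2 * t with hρdef
  have hρ : 0 < ρ := by positivity
  have hρρ₀ : ρ < ρ₀ := hNρ
  have h2ρ : ρ + ρ = r := by rw [hρdef, hrdef]; ring
  -- the main claim on every configuration
  have hD0 : (1 : ℝ≥0∞) ≤ ENNReal.ofReal ((N : ℝ) ^ (1 + s / (d : ℝ))) := by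
    rw [show (1:ℝ≥0∞) = ENNReal.ofReal 1 by simp]
    have h1 : (1:ℝ) ≤ (N:ℝ) ^ (1 + s / (d : ℝ)) :=
      Real.one_le_rpow (by exact_mod_cast hN1) (by positivity)
    exact ENNReal.ofReal_le_ofReal h1
  have hclaim : ENNReal.ofReal C * ENNReal.ofReal ((N : ℝ) ^ (1 + s / (d : ℝ)))
      ≤ minTupleEnergy s 1 A N := by
    refine le_iInf₂ fun x hx => ?_
    by_contra hcon
    push_neg at hcon
    -- bad and good indices
    set bad : Finset (Fin N) := Finset.univ.filter
      (fun i => ∃ j, j ≠ i ∧ edist (x i) (x j) < ENNReal.ofReal r) with hbaddef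
    set good : Finset (Fin N) := Finset.univ.filter
      (fun i => ¬ ∃ j, j ≠ i ∧ edist (x i) (x j) < ENNReal.ofReal r) with hgooddef
    have hcards : bad.card + good.card = N := by
      rw [hbaddef, hgooddef]
      simpa using Finset.card_filter_add_card_filter_not
        (s := Finset.univ) (p := fun i => ∃ j, j ≠ i ∧ edist (x i) (x j) < ENNReal.ofReal r)
    -- bad points
    have hbadE : (bad.card : ℝ≥0∞) * (ENNReal.ofReal r) ^ (-s) ≤ tupleEnergy s 1 x :=
      energy_lower_bound s hs.le x _ bad (fun i hi => (Finset.mem_filter.1 hi).2)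
    have hrs0 : (ENNReal.ofReal r) ^ (-s) ≠ 0 := by
      apply ne_of_gt
      exact ENNReal.rpow_pos (ENNReal.ofReal_pos.2 hr) ENNReal.ofReal_ne_top
    have hrstop : (ENNReal.ofReal r) ^ (-s) ≠ ⊤ := by
      rw [ENNReal.rpow_neg, ENNReal.inv_ne_top]
      exact (ENNReal.rpow_pos (ENNReal.ofReal_pos.2 hr) ENNReal.ofReal_ne_top).ne'
    have hbadlt : (bad.card : ℝ≥0∞) <
        ENNReal.ofReal C * ENNReal.ofReal ((N : ℝ) ^ (1 + s / (d : ℝ)))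
          / (ENNReal.ofReal r) ^ (-s) := by
      rw [ENNReal.lt_div_iff_mul_lt (Or.inl hrs0) (Or.inl hrstop)]
      exact lt_of_le_of_lt hbadE hcon
    have hdiv : ENNReal.ofReal C * ENNReal.ofReal ((N : ℝ) ^ (1 + s / (d : ℝ)))
          / (ENNReal.ofReal r) ^ (-s)
        = ENNReal.ofReal (C * ((N : ℝ) ^ (1 + s / (d : ℝ)) * r ^ s)) := by
      rw [ENNReal.rpow_neg, div_eq_mul_inv, inv_inv,
        ENNReal.ofReal_rpow_of_pos hr, ← ENNReal.ofReal_mul hC.le,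
        ← ENNReal.ofReal_mul (by positivity), mul_assoc]
    rw [hdiv] at hbadlt
    have hbadR : (bad.card : ℝ) < C * ((N : ℝ) ^ (1 + s / (d : ℝ)) * r ^ s) := by
      have h2 := (ENNReal.lt_ofReal_iff_toReal_lt (ENNReal.natCast_ne_top _)).1 hbadlt
      simpa using h2
    -- arithmetic: C * n^{1+s/d} * r^s = n/2
    have harith : C * ((N : ℝ) ^ (1 + s / (d : ℝ)) * r ^ s) = (N : ℝ) / 2 := by
      have hts : t ^ s = (N : ℝ) ^ (-(s / (d : ℝ))) := by
        rw [htdef, ← Real.rpow_mul hn0.le]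
        congr 1
        ring
      rw [hrdef, Real.mul_rpow hγ.le ht.le, hts,
        show (N:ℝ)^(1+s/(d:ℝ)) * (γ^s * (N:ℝ)^(-(s/(d:ℝ))))
          = ((N:ℝ)^(1+s/(d:ℝ)) * (N:ℝ)^(-(s/(d:ℝ)))) * γ^s by ring,
        ← Real.rpow_add hn0, show 1 + s/(d:ℝ) + -(s/(d:ℝ)) = 1 by ring, Real.rpow_one,
        show C * ((N:ℝ) * γ^s) = (C * γ^s) * N by ring, hγs]
      ring
    rw [harith] at hbadR
    have hgoodR : ((N : ℝ) / 2) < (good.card : ℝ) := by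
      have : (bad.card : ℝ) + (good.card : ℝ) = (N : ℝ) := by exact_mod_cast hcards
      linarith
    -- good points are r-separated
    have hsep : ∀ i ∈ good, ∀ j ∈ good, i ≠ j → ρ + ρ ≤ dist (x i) (x j) := by
      intro i hi j hj hij
      rw [h2ρ]
      have hi' := (Finset.mem_filter.1 hi).2
      push_neg at hi'
      have := hi' j (Ne.symm hij)
      rw [edist_dist] at this
      by_contra hlt
      push_neg at hlt
      exact absurd (lt_of_lt_of_le (ENNReal.ofReal_lt_ofReal_iff_of_nonneg dist_nonneg |>.2 hlt)
        le_rfl) (not_lt.2 this)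
    have hvol := volume_lower_bound p A x hx good hsep
    -- convert to reals
    have hballρ : volume (ball (0 : EuclideanSpace ℝ (Fin p)) ρ)
        = ENNReal.ofReal (ρ ^ p) * B := by
      rw [hBdef, Measure.addHaar_ball_of_pos _ _ hρ, finrank_euclideanSpace_fin]
    have hcth_fin : volume (cthickening ρ A) ≠ ⊤ := by
      refine (Bornology.IsBounded.measure_lt_top ?_).ne
      exact (hA.isBounded.cthickening)
    have hvolR : (good.card : ℝ) * (ρ ^ p * B.toReal)
        ≤ (volume (cthickening ρ A)).toReal := by
      have hle := hvol
      rw [hballρ] at hle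
      have := ENNReal.toReal_mono hcth_fin hle
      rw [ENNReal.toReal_mul, ENNReal.toReal_mul, ENNReal.toReal_ofReal (by positivity)] at this
      simpa [mul_assoc] using this
    have hMkρ := hMk ρ hρ hρρ₀
    have hVlt : (volume (cthickening ρ A)).toReal < ε * ρ ^ ((p : ℝ) - d) := by
      rw [div_lt_iff₀ (Real.rpow_pos_of_pos hρ _)] at hMkρ
      exact hMkρ
    -- combine
    have hchain : (N : ℝ) / 2 * (ρ ^ p * B.toReal) < ε * ρ ^ ((p : ℝ) - d) := by
      calc (N : ℝ) / 2 * (ρ ^ p * B.toReal)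
          ≤ (good.card : ℝ) * (ρ ^ p * B.toReal) := by
            apply mul_le_mul_of_nonneg_right hgoodR.le (by positivity)
        _ ≤ (volume (cthickening ρ A)).toReal := hvolR
        _ < ε * ρ ^ ((p : ℝ) - d) := hVlt
    -- simplify: ρ^p = ρ^(p-d) * ρ^d, divide
    have hρsplit : (ρ : ℝ) ^ p = ρ ^ ((p : ℝ) - d) * ρ ^ d := by
      rw [← Real.rpow_natCast ρ p, ← Real.rpow_natCast ρ d, ← Real.rpow_add hρ]
      ring_nf
    rw [hρsplit] at hchain
    have hρpd : 0 < ρ ^ ((p : ℝ) - d) := Real.rpow_pos_of_pos hρ _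
    have hfinal : (N : ℝ) / 2 * (ρ ^ d * B.toReal) < ε := by
      have h := hchain
      rw [show (N : ℝ) / 2 * (ρ ^ ((p : ℝ) - d) * ρ ^ d * B.toReal)
          = ((N : ℝ) / 2 * (ρ ^ d * B.toReal)) * ρ ^ ((p : ℝ) - d) by ring] at h
      exact lt_of_mul_lt_mul_right (by rw [mul_comm] at h ⊢; exact h) hρpd.le
    -- ρ^d * N = (γ/2)^d
    have hρd : (N : ℝ) * ρ ^ d = (γ / 2) ^ d := by
      rw [hρdef, mul_pow, htdef, ← Real.rpow_natCast ((N:ℝ) ^ (-(1/(d:ℝ)))) d,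
        ← Real.rpow_mul hn0.le]
      have : (-(1 / (d : ℝ))) * d = -1 := by
        field_simp
      rw [this, Real.rpow_neg_one]
      field_simp
    have : (1 : ℝ) / 2 * ((γ / 2) ^ d * B.toReal) < ε := by
      have := hfinal
      rw [show (N : ℝ) / 2 * (ρ ^ d * B.toReal)
          = 1 / 2 * (((N : ℝ) * ρ ^ d) * B.toReal) by ring, hρd] at this
      exact this
    rw [hεdef] at this
    nlinarith [hBt, pow_pos (by positivity : (0:ℝ) < γ / 2) d]
  -- conclude
  have hlast : c < minTupleEnergy s 1 A N / ENNReal.ofReal ((N : ℝ) ^ (1 + s / (d : ℝ))) := by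
    have hcC : c < ENNReal.ofReal C := by
      rw [hCdef]
      calc c = ENNReal.ofReal c.toReal := (ENNReal.ofReal_toReal hc.ne).symm
        _ < ENNReal.ofReal (c.toReal + 1) := by
            rw [ENNReal.ofReal_lt_ofReal_iff (by positivity)]
            linarith [ENNReal.toReal_nonneg (a := c)]
    refine lt_of_lt_of_le hcC ?_
    rw [ENNReal.le_div_iff_mul_le (Or.inl (by
        intro h0; rw [h0] at hD0; simpa using hD0)) (Or.inl ENNReal.ofReal_ne_top)]
    exact hclaim
  exact hlast
end
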